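/- Let R = C^∞(ℝ^m,ℝ) and let F ⊆ R be the finite-dimensional linear subspace of all polynomial functions of total degree less than d. Then F is transverse to every ideal 𝔪_Y: for all distinct points y₁, …, y_n ∈ ℝ^m and positive integers k₁, …, k_n with k₁ + ⋯ + k_n = d, one has F + ((𝔪_{y₁})^{k₁} ∩ ⋯ ∩ (𝔪_{y_n})^{k_n}) = R. -/

import Mathlib

open scoped Manifold
open Module

noncomputable section

/-- The ℝ-algebra of smooth real-valued functions on `ℝ^m`. -/
abbrev SmoothFnsE (m : ℕ) : Type _ :=
  C^(⊤ : ℕ∞)⟮𝓡 m, EuclideanSpace ℝ (Fin m); 𝓘(ℝ, ℝ), ℝ⟯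

variable {m : ℕ}

/-- The ideal `𝔪ₓ` of smooth functions on `ℝ^m` vanishing at the point `x`. -/
def mIdealE (x : EuclideanSpace ℝ (Fin m)) : Ideal (SmoothFnsE m) where
  carrier := {f | f x = 0}
  add_mem' := by intro f g hf hg; simp_all
  zero_mem' := by simp
  smul_mem' := by intro c f hf; simp_all

/-- The subspace of `C^∞(ℝ^m,ℝ)` of polynomial functions of total degree less than `d`. -/
def polySubspace (m d : ℕ) : Submodule ℝ (SmoothFnsE m) :=
  Submodule.span ℝ {f : SmoothFnsE m | ∃ p : MvPolynomial (Fin m) ℝ,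
    p.totalDegree < d ∧ ∀ x : EuclideanSpace ℝ (Fin m), f x = MvPolynomial.eval (fun i => x i) p}

/-!
Hadamard's lemma `f x = f y + ∑ⱼ (xⱼ - yⱼ) gⱼ x`, with smooth `gⱼ`, gives by induction a
polynomial `p` of degree `≤ k` with `f - p ∈ 𝔪_y ^ (k + 1)`.
For each `i`, a product `eᵢ` of powers `ℓⱼ ^ kⱼ` (`j ≠ i`) of affine functions with `ℓⱼ (yⱼ) = 0`
and `ℓⱼ (yᵢ) ≠ 0` has degree `≤ d - kᵢ`, lies in `𝔪_{yⱼ} ^ kⱼ` for `j ≠ i`, and is invertible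
modulo every power of the maximal ideal `𝔪_{yᵢ}`. Expanding `s * f`, for such an inverse `s`, as
above yields `wᵢ` of degree `< kᵢ` with `f ≡ wᵢ eᵢ` modulo `𝔪_{yᵢ} ^ kᵢ`, and then `∑ᵢ wᵢ eᵢ` is a
polynomial of degree `< d` congruent to `f` modulo every `𝔪_{yᵢ} ^ kᵢ`.
-/

open MeasureTheory Set MvPolynomial

theorem contDiff_intervalIntegral_zero_one {E F : Type*} [NormedAddCommGroup E] [NormedSpace ℝ E]
    [NormedAddCommGroup F] [NormedSpace ℝ F] [CompleteSpace F] {n : ℕ∞} {G : E × ℝ → F}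
    (hG : ContDiff ℝ n G) : ContDiff ℝ n fun x => ∫ t in (0 : ℝ)..1, G (x, t) := by
  -- Write the integral as the value at `0` of the convolution of `1_(0,1]` with a cut-off of
  -- `u ↦ G (x, -u)`, and use smoothness of convolutions with parameters.
  let χ : ContDiffBump (-1 / 2 : ℝ) := ⟨1, 2, one_pos, one_lt_two⟩
  let g : E → ℝ → F := fun x u => χ u • G (x, -u)
  have hχ_one : ∀ t ∈ Ioc (0 : ℝ) 1, χ (-t) = 1 := fun t ⟨h0, h1⟩ =>
    χ.one_of_mem_closedBall <| by
      rw [Metric.mem_closedBall, Real.dist_eq, abs_le]; constructor <;> linarith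
  have hg_supp : ∀ x u, x ∈ (univ : Set E) → u ∉ Metric.closedBall (-1 / 2 : ℝ) 2 →
      g x u = 0 := fun x u _ hu => by
    simp [g, χ.zero_of_le_dist (not_le.1 (Metric.mem_closedBall.not.1 hu)).le]
  have hind : LocallyIntegrable ((Ioc (0 : ℝ) 1).indicator 1) volume :=
    ((integrable_indicator_iff measurableSet_Ioc).2
      (integrableOn_const measure_Ioc_lt_top.ne (C := (1 : ℝ)))).locallyIntegrable
  have hconv := contDiffOn_convolution_right_with_param (μ := volume)
    (ContinuousLinearMap.lsmul ℝ ℝ) isOpen_univ (isCompact_closedBall _ _) hg_supp hind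
    ((χ.contDiff.comp contDiff_snd).smul
      (hG.comp (contDiff_fst.prodMk contDiff_snd.neg))).contDiffOn
  rw [univ_prod_univ, contDiffOn_univ] at hconv
  have heq (x : E) : ∫ t in (0 : ℝ)..1, G (x, t) =
      convolution ((Ioc (0 : ℝ) 1).indicator 1) (g x) (ContinuousLinearMap.lsmul ℝ ℝ) volume 0 := by
    rw [convolution, intervalIntegral.integral_of_le zero_le_one,
      ← integral_indicator measurableSet_Ioc]
    congr 1 with t
    by_cases ht : t ∈ Ioc (0 : ℝ) 1
    · simp [g, ht, hχ_one t ht]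
    · simp [ht]
  rw [funext heq]
  exact hconv.comp (contDiff_id.prodMk contDiff_const)

theorem exists_contDiff_eq_add_apply_sub {E F : Type*} [NormedAddCommGroup E] [NormedSpace ℝ E]
    [NormedAddCommGroup F] [NormedSpace ℝ F] [CompleteSpace F] {f : E → F}
    (hf : ContDiff ℝ (⊤ : ℕ∞) f) (y : E) :
    ∃ G : E → E →L[ℝ] F, ContDiff ℝ (⊤ : ℕ∞) G ∧ ∀ x, f x = f y + G x (x - y) := by
  have hf' : ContDiff ℝ (⊤ : ℕ∞) (fderiv ℝ f) := hf.fderiv_right (by simp)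
  refine ⟨fun x => ∫ t in (0 : ℝ)..1, fderiv ℝ f (y + t • (x - y)),
    contDiff_intervalIntegral_zero_one (hf'.comp
      (show ContDiff ℝ (⊤ : ℕ∞) fun p : E × ℝ => y + p.2 • (p.1 - y) by fun_prop)), fun x => ?_⟩
  have hderiv : ∀ t : ℝ, HasDerivAt (fun t => f (y + t • (x - y)))
      (fderiv ℝ f (y + t • (x - y)) (x - y)) t := fun t => by
    have := ((hasDerivAt_id t).smul_const (x - y)).const_add y
    rw [one_smul] at this
    exact (hf.differentiable (by simp) _).hasFDerivAt.comp_hasDerivAt t this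
  have hcont : Continuous fun t : ℝ => fderiv ℝ f (y + t • (x - y)) :=
    hf'.continuous.comp (by fun_prop)
  rw [ContinuousLinearMap.intervalIntegral_apply (hcont.intervalIntegrable 0 1),
    intervalIntegral.integral_eq_sub_of_hasDerivAt (fun t _ => hderiv t)
      ((hcont.clm_apply continuous_const).intervalIntegrable 0 1)]
  simp

namespace SmoothFnsE

def ofContDiff (f : EuclideanSpace ℝ (Fin m) → ℝ) (hf : ContDiff ℝ (⊤ : ℕ∞) f) : SmoothFnsE m :=
  ⟨f, contMDiff_iff_contDiff.2 hf⟩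

@[simp]
theorem ofContDiff_apply (f : EuclideanSpace ℝ (Fin m) → ℝ) (hf : ContDiff ℝ (⊤ : ℕ∞) f)
    (x : EuclideanSpace ℝ (Fin m)) : ofContDiff f hf x = f x := rfl

theorem contDiff (f : SmoothFnsE m) : ContDiff ℝ (⊤ : ℕ∞) f :=
  contMDiff_iff_contDiff.1 f.contMDiff

def coord (i : Fin m) : SmoothFnsE m :=
  ofContDiff (fun x => x i) (EuclideanSpace.proj i : EuclideanSpace ℝ (Fin m) →L[ℝ] ℝ).contDiff

@[simp]
theorem coord_apply (i : Fin m) (x : EuclideanSpace ℝ (Fin m)) : coord i x = x i := rfl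

@[simp]
theorem sum_apply {ι : Type*} (s : Finset ι) (f : ι → SmoothFnsE m)
    (x : EuclideanSpace ℝ (Fin m)) :
    (∑ i ∈ s, f i) x = ∑ i ∈ s, f i x :=
  map_sum (ContMDiffMap.evalRingHom x) f s

@[simp]
theorem algebraMap_apply (r : ℝ) (x : EuclideanSpace ℝ (Fin m)) :
    algebraMap ℝ (SmoothFnsE m) r x = r := rfl

def polyEval : MvPolynomial (Fin m) ℝ →ₐ[ℝ] SmoothFnsE m :=
  aeval coord

@[simp]
theorem polyEval_apply (p : MvPolynomial (Fin m) ℝ) (x : EuclideanSpace ℝ (Fin m)) :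
    polyEval p x = eval (fun i => x i) p := by
  induction p using MvPolynomial.induction_on with
  | C a => simp [polyEval]
  | add p q hp hq => simp_all
  | mul_X p i hp => simp_all [polyEval]

theorem exists_eq_add_sum_mul (f : SmoothFnsE m) (y : EuclideanSpace ℝ (Fin m)) :
    ∃ g : Fin m → SmoothFnsE m,
      f = polyEval (C (f y)) + ∑ j, polyEval (X j - C (y j)) * g j := by
  obtain ⟨G, hG, hfG⟩ := exists_contDiff_eq_add_apply_sub f.contDiff y
  refine ⟨fun j => ofContDiff _ (hG.clm_apply (contDiff_const (c := EuclideanSpace.single j 1))),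
    ContMDiffMap.ext fun x => ?_⟩
  conv_lhs => rw [hfG x, ← (EuclideanSpace.basisFun (Fin m) ℝ).sum_repr (x - y)]
  simp

end SmoothFnsE

open SmoothFnsE

@[simp]
theorem mem_mIdealE {x : EuclideanSpace ℝ (Fin m)} {f : SmoothFnsE m} :
    f ∈ mIdealE x ↔ f x = 0 := Iff.rfl

instance mIdealE.isMaximal (x : EuclideanSpace ℝ (Fin m)) : (mIdealE x).IsMaximal :=
  RingHom.ker_isMaximal_of_surjective (ContMDiffMap.evalRingHom x) fun r =>
    ⟨ContMDiffMap.const r, rfl⟩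

theorem polyEval_mem_polySubspace {d : ℕ} {p : MvPolynomial (Fin m) ℝ} (hp : p.totalDegree < d) :
    polyEval p ∈ polySubspace m d :=
  Submodule.subset_span ⟨p, hp, polyEval_apply p⟩

theorem polySubspace_finiteDimensional (m d : ℕ) : FiniteDimensional ℝ (polySubspace m d) := by
  refine Submodule.finiteDimensional_of_le (S₂ := (restrictTotalDegree (Fin m) ℝ (d - 1)).map
    (polyEval : MvPolynomial (Fin m) ℝ →ₐ[ℝ] SmoothFnsE m).toLinearMap) ?_
  rw [polySubspace, Submodule.span_le]
  rintro f ⟨p, hp, hf⟩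
  exact ⟨p, (mem_restrictTotalDegree _ _ _).2 (by omega), ContMDiffMap.ext fun x => by simp [hf]⟩

theorem MvPolynomial.totalDegree_X_sub_C_le {σ R : Type*} [CommRing R] [Nontrivial R] (i : σ)
    (r : R) :
    (X i - C r : MvPolynomial σ R).totalDegree ≤ 1 :=
  (totalDegree_sub _ _).trans (max_le (totalDegree_X i).le (by simp))

theorem polyEval_X_sub_C_mem_mIdealE (y : EuclideanSpace ℝ (Fin m)) (j : Fin m) :
    polyEval (X j - C (y j)) ∈ mIdealE y := by
  simp

theorem exists_totalDegree_le_sub_mem_pow (k : ℕ) (f : SmoothFnsE m)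
    (y : EuclideanSpace ℝ (Fin m)) :
    ∃ p : MvPolynomial (Fin m) ℝ, p.totalDegree ≤ k ∧ f - polyEval p ∈ mIdealE y ^ (k + 1) := by
  induction k generalizing f with
  | zero => exact ⟨C (f y), by simp, by simp⟩
  | succ k ih =>
    obtain ⟨g, hg⟩ := exists_eq_add_sum_mul f y
    choose p hp_deg hp_mem using fun j => ih (g j)
    refine ⟨C (f y) + ∑ j, (X j - C (y j)) * p j, ?_, ?_⟩
    · refine (totalDegree_add _ _).trans (max_le (by simp) ?_)
      refine (totalDegree_finsetSum _ _).trans (Finset.sup_le fun j _ => ?_)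
      have := totalDegree_X_sub_C_le j (y j)
      have := hp_deg j
      exact (totalDegree_mul _ _).trans (by omega)
    · have hdiff : f - polyEval (C (f y) + ∑ j, (X j - C (y j)) * p j) =
          ∑ j, polyEval (X j - C (y j)) * (g j - polyEval (p j)) := by
        rw [map_add, ← sub_sub, sub_eq_of_eq_add' hg, map_sum]
        simp only [map_mul, mul_sub, Finset.sum_sub_distrib]
      rw [hdiff, pow_succ']
      exact Ideal.sum_mem _ fun j _ =>
        Ideal.mul_mem_mul (polyEval_X_sub_C_mem_mIdealE y j) (hp_mem j)

theorem exists_totalDegree_le_one_mem_mIdealE_notMem {a b : EuclideanSpace ℝ (Fin m)}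
    (hab : a ≠ b) :
    ∃ ℓ : MvPolynomial (Fin m) ℝ, ℓ.totalDegree ≤ 1 ∧ polyEval ℓ ∈ mIdealE b ∧
      polyEval ℓ ∉ mIdealE a := by
  obtain ⟨j, hj⟩ : ∃ j, a j ≠ b j := by
    by_contra! h
    exact hab (PiLp.ext h)
  exact ⟨X j - C (b j), totalDegree_X_sub_C_le j (b j), polyEval_X_sub_C_mem_mIdealE b j,
    by simpa [sub_eq_zero] using hj⟩

theorem exists_notMem_mIdealE_mem_pow_of_ne {n : ℕ} {y : Fin n → EuclideanSpace ℝ (Fin m)}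
    (hy : Function.Injective y) (k : Fin n → ℕ) (i : Fin n) :
    ∃ e : MvPolynomial (Fin m) ℝ, e.totalDegree ≤ ∑ j ∈ Finset.univ.erase i, k j ∧
      polyEval e ∉ mIdealE (y i) ∧ ∀ j ≠ i, polyEval e ∈ mIdealE (y j) ^ k j := by
  choose! ℓ hℓ_deg hℓ_mem hℓ_notMem using fun j (hj : j ≠ i) =>
    exists_totalDegree_le_one_mem_mIdealE_notMem (hy.ne hj.symm)
  refine ⟨∏ j ∈ Finset.univ.erase i, ℓ j ^ k j, ?_, ?_, fun j hj => ?_⟩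
  · refine (totalDegree_finsetProd _ _).trans (Finset.sum_le_sum fun j hj => ?_)
    have := hℓ_deg j (Finset.ne_of_mem_erase hj)
    exact (totalDegree_pow _ _).trans (by nlinarith)
  · simp only [map_prod, map_pow, Ideal.IsPrime.prod_mem_iff, not_exists, not_and]
    exact fun j hj hmem => hℓ_notMem j (Finset.ne_of_mem_erase hj)
      (Ideal.IsPrime.mem_of_pow_mem inferInstance _ hmem)
  · rw [← Finset.mul_prod_erase _ _ (Finset.mem_erase.2 ⟨hj, Finset.mem_univ j⟩), map_mul,
      map_pow]
    exact Ideal.mul_mem_right _ _ (Ideal.pow_mem_pow (hℓ_mem j hj) _)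

theorem exists_totalDegree_le_sub_mul_mem_pow {e : MvPolynomial (Fin m) ℝ}
    {y : EuclideanSpace ℝ (Fin m)} (he : polyEval e ∉ mIdealE y) (k : ℕ) (f : SmoothFnsE m) :
    ∃ w : MvPolynomial (Fin m) ℝ, w.totalDegree ≤ k ∧
      f - polyEval (w * e) ∈ mIdealE y ^ (k + 1) := by
  obtain ⟨s, r, hr, hsr⟩ := Ideal.IsMaximal.exists_inv_pow _ he (k + 1)
  obtain ⟨w, hw_deg, hw_mem⟩ := exists_totalDegree_le_sub_mem_pow k (s * f) y
  refine ⟨w, hw_deg, ?_⟩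
  have : f - polyEval (w * e) = (s * f - polyEval w) * polyEval e + f * r := by
    rw [map_mul]; linear_combination (-f) * hsr
  rw [this]
  exact Ideal.add_mem _ (Ideal.mul_mem_right _ _ hw_mem) (Ideal.mul_mem_left _ _ hr)

theorem Ideal.sub_sum_mem_iInf {R ι : Type*} [CommRing R] [Fintype ι] {J : ι → Ideal R}
    {f : R} {a : ι → R} (hself : ∀ i, f - a i ∈ J i) (hother : ∀ i j, j ≠ i → a j ∈ J i) :
    f - ∑ j, a j ∈ ⨅ i, J i := by
  classical
  refine Submodule.mem_iInf _ |>.2 fun i => ?_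
  rw [← Finset.add_sum_erase _ _ (Finset.mem_univ i), ← sub_sub]
  exact Ideal.sub_mem _ (hself i)
    (Ideal.sum_mem _ fun j hj => hother i j (Finset.ne_of_mem_erase hj))

theorem exists_mem_polySubspace_sub_mem_iInf {n d : ℕ} {y : Fin n → EuclideanSpace ℝ (Fin m)}
    (hy : Function.Injective y) {k : Fin n → ℕ} (hk : ∀ i, 0 < k i) (hsum : ∑ i, k i = d)
    (f : SmoothFnsE m) : ∃ P ∈ polySubspace m d, f - P ∈ ⨅ i, mIdealE (y i) ^ k i := by
  choose e he_deg he_notMem he_mem using exists_notMem_mIdealE_mem_pow_of_ne hy k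
  have hlocal : ∀ i, ∃ w : MvPolynomial (Fin m) ℝ, w.totalDegree ≤ k i - 1 ∧
      f - polyEval (w * e i) ∈ mIdealE (y i) ^ k i := fun i => by
    simpa only [Nat.sub_add_cancel (hk i)] using
      exists_totalDegree_le_sub_mul_mem_pow (he_notMem i) (k i - 1) f
  choose w hw_deg hw_mem using hlocal
  refine ⟨∑ i, polyEval (w i * e i), Submodule.sum_mem _ fun i _ => ?_,
    Ideal.sub_sum_mem_iInf hw_mem fun i j hji => ?_⟩
  · refine polyEval_mem_polySubspace ((totalDegree_mul _ _).trans_lt ?_)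
    have := Finset.add_sum_erase _ k (Finset.mem_univ i)
    have := hw_deg i
    have := he_deg i
    have := hk i
    omega
  · rw [map_mul]
    exact Ideal.mul_mem_left _ _ (he_mem j i hji.symm)

/-- The subspace `F ⊆ C^∞(ℝ^m,ℝ)` of polynomial functions of total degree
less than `d` is finite dimensional and transverse to every ideal
`𝔪_Y = (𝔪_{y 1})^{k 1} ∩ ⋯ ∩ (𝔪_{y n})^{k n}` where the points `y i` are distinct and the
positive weights `k i` sum to `d`. -/
theorem polySubspace_transverse_to_mY (m d : ℕ) :
    FiniteDimensional ℝ (polySubspace m d) ∧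
    ∀ (n : ℕ) (y : Fin n → EuclideanSpace ℝ (Fin m)), Function.Injective y →
      ∀ k : Fin n → ℕ, (∀ i, 0 < k i) → ∑ i, k i = d →
        polySubspace m d ⊔ (⨅ i, (mIdealE (y i)) ^ (k i)).restrictScalars ℝ = ⊤ := by
  refine ⟨polySubspace_finiteDimensional m d, fun n y hy k hk hsum => ?_⟩
  refine eq_top_iff.2 fun f _ => ?_
  obtain ⟨P, hP, hfP⟩ := exists_mem_polySubspace_sub_mem_iInf hy hk hsum f
  exact Submodule.mem_sup.2 ⟨P, hP, f - P, hfP, add_sub_cancel P f⟩
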